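/- arXiv:2511.00543 — 2 statements merged into one kernel-verified Lean document; each statement's English description precedes it below -/
import Mathlib

section
/- Let S be a finite type, F : S → ℝ with F s > 0 for all s, and PF, PB : S → S → ℝ nonnegative. Assume the one-step balance condition: F s · PF s' s = F s' · PB s s' for all s, s' ∈ S, and assume the backward policy is normalized: ∑_{s∈S} PB s s' = 1 for every s' ∈ S. Then for every trajectory length L ≥ 1 and every terminal state x ∈ S, the flow-weighted total forward probability of all length-L sub-trajectories ending at x satisfies ∑_{(s_0,…,s_{L−1}) ∈ S^L} F(s_0) · ∏_{t=0}^{L−1} PF(s_{t+1} | s_t) = F(x), where s_L = x. In particular, when F = C·R with C constant, the expected cumulative forward probability of sub-trajectories ending at x is proportional to the reward R(x). (Paper's Theorem 1, for a discretized state space.) -/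
/-- The state at time `t` along a length-`L` sub-trajectory whose first `L` states are
given by `traj` and whose terminal state (time `L`) is `x`. -/
def subTrajState {S : Type*} (L : ℕ) (x : S) (traj : Fin L → S) (t : ℕ) : S :=
  if h : t < L then traj ⟨t, h⟩ else x

lemma subTrajState_cons_zero {S : Type*} (L : ℕ) (x s0 : S) (traj : Fin L → S) :
    subTrajState (L + 1) x (Fin.cons s0 traj) 0 = s0 := by
  simp [subTrajState]

lemma subTrajState_cons_succ {S : Type*} (L : ℕ) (x s0 : S) (traj : Fin L → S) (t : ℕ) :
    subTrajState (L + 1) x (Fin.cons s0 traj) (t + 1) = subTrajState L x traj t := by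
  unfold subTrajState
  by_cases h : t < L
  · rw [dif_pos (Nat.succ_lt_succ h), dif_pos h]
    have hi : (⟨t + 1, Nat.succ_lt_succ h⟩ : Fin (L + 1)) = Fin.succ ⟨t, h⟩ := rfl
    rw [hi, Fin.cons_succ]
  · rw [dif_neg (fun h' => h (Nat.lt_of_succ_lt_succ h')), dif_neg h]

lemma hybrid_subTB_aux {S : Type*} [Fintype S]
    (F : S → ℝ) (PF PB : S → S → ℝ)
    (balance : ∀ s s', F s * PF s' s = F s' * PB s s')
    (hnorm : ∀ s' : S, ∑ s : S, PB s s' = 1)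
    (L : ℕ) (x : S) :
    ∑ traj : Fin L → S,
        F (subTrajState L x traj 0) *
          ∏ t ∈ Finset.range L,
            PF (subTrajState L x traj (t + 1)) (subTrajState L x traj t)
      = F x := by
  have step : ∀ s' : S, ∑ s : S, F s * PF s' s = F s' := by
    intro s'
    calc ∑ s : S, F s * PF s' s = ∑ s : S, F s' * PB s s' := by
          exact Finset.sum_congr rfl fun s _ => balance s s'
      _ = F s' * ∑ s : S, PB s s' := by rw [Finset.mul_sum]
      _ = F s' := by rw [hnorm, mul_one]
  induction L with
  | zero => simp [subTrajState]
  | succ L ih =>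
    rw [← (Fin.consEquiv fun _ : Fin (L+1) => S).sum_comp]
    rw [Fintype.sum_prod_type]
    have key : ∀ (s0 : S) (traj : Fin L → S),
        F (subTrajState (L+1) x ((Fin.consEquiv fun _ : Fin (L+1) => S) (s0, traj)) 0) *
          ∏ t ∈ Finset.range (L+1),
            PF (subTrajState (L+1) x ((Fin.consEquiv fun _ : Fin (L+1) => S) (s0, traj)) (t + 1))
              (subTrajState (L+1) x ((Fin.consEquiv fun _ : Fin (L+1) => S) (s0, traj)) t)
        = (F s0 * PF (subTrajState L x traj 0) s0) *
            ∏ t ∈ Finset.range L,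
              PF (subTrajState L x traj (t + 1)) (subTrajState L x traj t) := by
      intro s0 traj
      have he : (Fin.consEquiv fun _ : Fin (L+1) => S) (s0, traj) = Fin.cons s0 traj := rfl
      rw [he, Finset.prod_range_succ', subTrajState_cons_zero]
      simp only [subTrajState_cons_succ, subTrajState_cons_zero]
      ring
    simp only [key]
    rw [Finset.sum_comm]
    have : ∀ traj : Fin L → S,
        ∑ s0 : S, (F s0 * PF (subTrajState L x traj 0) s0) *
            ∏ t ∈ Finset.range L,
              PF (subTrajState L x traj (t + 1)) (subTrajState L x traj t)
        = F (subTrajState L x traj 0) *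
            ∏ t ∈ Finset.range L,
              PF (subTrajState L x traj (t + 1)) (subTrajState L x traj t) := by
      intro traj
      rw [← Finset.sum_mul, step]
    simp only [this]
    exact ih

/-- **Paper's Theorem 1 (discretized state space).**
If the one-step balance condition `F s * PF s' s = F s' * PB s s'` holds and the backward
policy is normalized (`∑ s, PB s s' = 1` for every `s'`), then for every trajectory length
`L ≥ 1` and terminal state `x`, the flow-weighted total forward probability of all length-`L`
sub-trajectories ending at `x` equals `F x`; in particular, when `F = C • R` with `C` constant,
it is proportional to the reward `R x`. -/
theorem hybrid_subTB_local_property {S : Type*} [Fintype S]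
    (F : S → ℝ) (PF PB : S → S → ℝ)
    (hF : ∀ s, 0 < F s)
    (hPF : ∀ s s', 0 ≤ PF s' s)
    (hPB : ∀ s s', 0 ≤ PB s s')
    (balance : ∀ s s', F s * PF s' s = F s' * PB s s')
    (hnorm : ∀ s' : S, ∑ s : S, PB s s' = 1)
    (L : ℕ) (hL : 1 ≤ L) (x : S) :
    ∑ traj : Fin L → S,
        F (subTrajState L x traj 0) *
          ∏ t ∈ Finset.range L,
            PF (subTrajState L x traj (t + 1)) (subTrajState L x traj t)
      = F x := by
  exact hybrid_subTB_aux F PF PB balance hnorm L x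
end

section
/- Let E be a Euclidean space EuclideanSpace ℝ (Fin d) and f : E → ℝ a differentiable function with gradient ∇f. Assume: (i) ∇f is Lipschitz with constant l > 0 (l-smoothness); (ii) f is μ-strongly convex on E with 0 < μ ≤ l; (iii) θ* is a global minimizer of f; (iv) the curvature bound around the optimum: f(θ) ≤ f(θ*) + (λ/2)·‖θ − θ*‖² for all θ ∈ E, with λ > 0; (v) the gradient-descent iterates θ_{t+1} = θ_t − (1/l)·∇f(θ_t) satisfy f(θ_0) − f(θ*) ≤ ψ; (vi) the generated weight θ̂ has reconstruction error ‖θ̂ − θ_T‖ ≤ √c for some c ≥ 0. Then the cumulative empirical error of the decoupled weight-generation framework satisfies f(θ̂) − f(θ*) ≤ (λ/2)·( √c + √( (2ψ/μ)·(1 − μ/l)^T ) )². (Paper's Theorem 3: the reconstruction error of the generative model affects the bound only through the additive term c, and the bound improves by reducing the maximal Hessian eigenvalue λ.) -/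
section Aux
set_option linter.unusedSectionVars false

open InnerProductSpace Set

variable {E : Type*} [NormedAddCommGroup E] [InnerProductSpace ℝ E] [CompleteSpace E]

/-- Derivative of `f` along a line. -/
lemma aux_hasDerivAt_line {f : E → ℝ} (hf : Differentiable ℝ f) (x v : E) (t : ℝ) :
    HasDerivAt (fun s : ℝ => f (x + s • v)) ⟪gradient f (x + t • v), v⟫_ℝ t := by
  have hline : HasDerivAt (fun s : ℝ => x + s • v) v t := by
    simpa using ((hasDerivAt_id t).smul_const v).const_add x
  have h := ((hf (x + t • v)).hasGradientAt.hasFDerivAt).comp_hasDerivAt t hline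
  simpa [InnerProductSpace.toDual_apply_apply, Function.comp_def] using h

/-- From a derivative at `0` and the secant bound, get the first-order inequality. -/
lemma aux_slope (ψ : ℝ → ℝ) (D : ℝ) (hD : HasDerivAt ψ D 0)
    (hconv : ∀ s ∈ Set.Ioc (0:ℝ) 1, ψ s ≤ (1 - s) * ψ 0 + s * ψ 1) :
    ψ 0 + D ≤ ψ 1 := by
  have h1 : Filter.Tendsto (slope ψ 0) (nhdsWithin 0 (Set.Ioi 0)) (nhds D) :=
    (hasDerivAt_iff_tendsto_slope.1 hD).mono_left
      (nhdsWithin_mono 0 (fun s hs => ne_of_gt hs))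
  have h2 : D ≤ ψ 1 - ψ 0 := by
    refine le_of_tendsto h1 ?_
    filter_upwards [Ioc_mem_nhdsGT_of_mem (Set.left_mem_Ico.2 one_pos)] with s hs
    have hs0 : 0 < s := hs.1
    have := hconv s hs
    rw [slope_def_field, sub_zero, div_le_iff₀ hs0]
    nlinarith [this]
  linarith

lemma aux_sq_poly (x v : E) (s : ℝ) :
    ‖x + s • v‖ ^ 2 = ‖x‖ ^ 2 + 2 * (⟪x, v⟫_ℝ) * s + ‖v‖ ^ 2 * s ^ 2 := by
  have := norm_add_sq_real x (s • v)
  rw [this, real_inner_smul_right, norm_smul]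
  simp [mul_pow, sq_abs]
  ring

/-- First-order condition for strong convexity. -/
lemma aux_strong_convex {f : E → ℝ} (hf : Differentiable ℝ f) {μ : ℝ}
    (hsc : ConvexOn ℝ Set.univ (fun θ => f θ - μ / 2 * ‖θ‖ ^ 2)) (x y : E) :
    f x + ⟪gradient f x, y - x⟫_ℝ + μ / 2 * ‖y - x‖ ^ 2 ≤ f y := by
  set v := y - x with hv
  set ψ : ℝ → ℝ := fun s => f (x + s • v) - μ / 2 * ‖x + s • v‖ ^ 2 with hψ
  have hD : HasDerivAt ψ (⟪gradient f x, v⟫_ℝ - μ * ⟪x, v⟫_ℝ) 0 := by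
    have h1 : HasDerivAt (fun s : ℝ => f (x + s • v)) ⟪gradient f x, v⟫_ℝ 0 := by
      simpa using aux_hasDerivAt_line hf x v 0
    have h2 : HasDerivAt (fun s : ℝ => μ / 2 * ‖x + s • v‖ ^ 2) (μ * ⟪x, v⟫_ℝ) 0 := by
      have h3 : HasDerivAt (fun s : ℝ => ‖x‖ ^ 2 + 2 * (⟪x, v⟫_ℝ) * s + ‖v‖ ^ 2 * s ^ 2)
          (2 * ⟪x, v⟫_ℝ) 0 := by
        have ha : HasDerivAt (fun s : ℝ => 2 * (⟪x, v⟫_ℝ) * s) (2 * ⟪x, v⟫_ℝ) 0 := by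
          simpa using (hasDerivAt_id (0:ℝ)).const_mul (2 * ⟪x, v⟫_ℝ)
        have hb : HasDerivAt (fun s : ℝ => ‖v‖ ^ 2 * s ^ 2) 0 0 := by
          simpa using (hasDerivAt_pow 2 (0:ℝ)).const_mul (‖v‖ ^ 2)
        simpa [Pi.add_def] using ((hasDerivAt_const (0:ℝ) (‖x‖^2)).add ha).add hb
      have h4 := h3.const_mul (μ / 2)
      have h5 : HasDerivAt (fun s : ℝ => μ / 2 * ‖x + s • v‖ ^ 2) (μ / 2 * (2 * ⟪x, v⟫_ℝ)) 0 := by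
        simp only [aux_sq_poly x v]
        exact h4
      convert h5 using 1
      ring
    simpa [Pi.sub_def] using h1.sub h2
  have hconv : ∀ s ∈ Set.Ioc (0:ℝ) 1, ψ s ≤ (1 - s) * ψ 0 + s * ψ 1 := by
    intro s hs
    have hmem := hsc.2 (Set.mem_univ x) (Set.mem_univ y)
      (by linarith [hs.1, hs.2] : (0:ℝ) ≤ 1 - s) (le_of_lt hs.1) (by ring)
    have hxy : (1 - s) • x + s • y = x + s • v := by
      rw [hv]; module
    simp only [smul_eq_mul] at hmem
    rw [hxy] at hmem
    have h0 : ψ 0 = f x - μ / 2 * ‖x‖ ^ 2 := by simp [hψ]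
    have h1 : ψ 1 = f y - μ / 2 * ‖y‖ ^ 2 := by simp [hψ, hv]
    rw [h0, h1]
    simpa [hψ] using hmem
  have key := aux_slope ψ _ hD hconv
  have h0 : ψ 0 = f x - μ / 2 * ‖x‖ ^ 2 := by simp [hψ]
  have h1 : ψ 1 = f y - μ / 2 * ‖y‖ ^ 2 := by simp [hψ, hv]
  rw [h0, h1] at key
  have hexp : ‖y - x‖ ^ 2 = ‖y‖ ^ 2 - 2 * ⟪x, y⟫_ℝ + ‖x‖ ^ 2 := by
    rw [norm_sub_sq_real, real_inner_comm]
  have hxv : ⟪x, v⟫_ℝ = ⟪x, y⟫_ℝ - ‖x‖ ^ 2 := by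
    rw [hv, inner_sub_right, real_inner_self_eq_norm_sq]
  rw [hxv] at key
  rw [hexp]
  linarith

lemma aux_hasDerivAt_line' {f : E → ℝ} (hf : Differentiable ℝ f) (x v : E) (t : ℝ) :
    HasDerivAt (fun s : ℝ => f (x + s • v)) ⟪gradient f (x + t • v), v⟫_ℝ t := by
  have hline : HasDerivAt (fun s : ℝ => x + s • v) v t := by
    simpa using ((hasDerivAt_id t).smul_const v).const_add x
  have h := ((hf (x + t • v)).hasGradientAt.hasFDerivAt).comp_hasDerivAt t hline
  simpa [InnerProductSpace.toDual_apply_apply, Function.comp_def] using h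

/-- Descent lemma for functions with Lipschitz gradient. -/
lemma aux_descent {f : E → ℝ} (hf : Differentiable ℝ f) {l : ℝ} (hl : 0 < l)
    (hlip : ∀ x y, ‖gradient f x - gradient f y‖ ≤ l * ‖x - y‖) (x y : E) :
    f y ≤ f x + ⟪gradient f x, y - x⟫_ℝ + l / 2 * ‖y - x‖ ^ 2 := by
  set v := y - x with hv
  have hgc : Continuous fun z => gradient f z := by
    have : LipschitzWith (Real.toNNReal l) (fun z => gradient f z) := by
      refine LipschitzWith.of_dist_le_mul fun a b => ?_
      rw [dist_eq_norm, dist_eq_norm]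
      calc ‖gradient f a - gradient f b‖ ≤ l * ‖a - b‖ := hlip a b
        _ = (Real.toNNReal l : ℝ) * ‖a - b‖ := by rw [Real.coe_toNNReal _ hl.le]
    exact this.continuous
  set ψ' : ℝ → ℝ := fun t => ⟪gradient f (x + t • v), v⟫_ℝ with hψ'
  have hψ'c : Continuous ψ' := by
    apply Continuous.inner
    · exact hgc.comp (by continuity)
    · exact continuous_const
  have hftc := intervalIntegral.integral_eq_sub_of_hasDerivAt
    (fun t (_ : t ∈ Set.uIcc (0:ℝ) 1) => aux_hasDerivAt_line' hf x v t)
    (hψ'c.intervalIntegrable 0 1)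
  have hbound : ∀ t ∈ Set.Icc (0:ℝ) 1, ψ' t ≤ ⟪gradient f x, v⟫_ℝ + l * ‖v‖ ^ 2 * t := by
    intro t ht
    have h1 : ψ' t - ⟪gradient f x, v⟫_ℝ = ⟪gradient f (x + t • v) - gradient f x, v⟫_ℝ := by
      rw [hψ', inner_sub_left]
    have h2 : ⟪gradient f (x + t • v) - gradient f x, v⟫_ℝ ≤
        ‖gradient f (x + t • v) - gradient f x‖ * ‖v‖ := real_inner_le_norm _ _
    have h3 : ‖gradient f (x + t • v) - gradient f x‖ ≤ l * (t * ‖v‖) := by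
      have := hlip (x + t • v) x
      simpa [norm_smul, abs_of_nonneg ht.1] using this
    have h4 : ‖gradient f (x + t • v) - gradient f x‖ * ‖v‖ ≤ l * (t * ‖v‖) * ‖v‖ :=
      mul_le_mul_of_nonneg_right h3 (norm_nonneg _)
    nlinarith [norm_nonneg v]
  have hint : ∫ t in (0:ℝ)..1, ψ' t ≤
      ∫ t in (0:ℝ)..1, (⟪gradient f x, v⟫_ℝ + l * ‖v‖ ^ 2 * t) := by
    apply intervalIntegral.integral_mono_on zero_le_one
    · exact hψ'c.intervalIntegrable 0 1
    · exact (by continuity : Continuous fun t : ℝ => ⟪gradient f x, v⟫_ℝ + l * ‖v‖ ^ 2 * t).intervalIntegrable 0 1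
    · exact hbound
  have hval : ∫ t in (0:ℝ)..1, (⟪gradient f x, v⟫_ℝ + l * ‖v‖ ^ 2 * t) =
      ⟪gradient f x, v⟫_ℝ + l / 2 * ‖v‖ ^ 2 := by
    rw [intervalIntegral.integral_add (intervalIntegrable_const)
      ((by fun_prop : Continuous fun t : ℝ => l * ‖v‖ ^ 2 * t).intervalIntegrable 0 1),
      intervalIntegral.integral_const, intervalIntegral.integral_const_mul, integral_id]
    norm_num
    ring
  simp only [one_smul, zero_smul, add_zero, hv, add_sub_cancel] at hftc
  rw [hftc, hval] at hint
  linarith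

end Aux



/-- **Paper's Theorem 3.**
Cumulative empirical error bound for the decoupled weight-generation framework:
if the downstream loss `f` has `l`-Lipschitz gradient and is `μ`-strongly convex
(`θ ↦ f θ - μ/2 ‖θ‖²` is convex) with global minimizer `θ*`, the curvature around the
optimum is bounded by `λ` (`f θ ≤ f θ* + λ/2 ‖θ - θ*‖²`), the gradient-descent iterates
with step size `1/l` start with suboptimality at most `ψ`, and the generated weight `θ̂`
reconstructs `θ_T` with error `‖θ̂ - θ_T‖ ≤ √c`, then
`f θ̂ - f θ* ≤ (λ/2) (√c + √((2ψ/μ)(1 - μ/l)^T))²`. -/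
theorem decoupled_weight_generation_error_bound {d : ℕ}
    (f : EuclideanSpace ℝ (Fin d) → ℝ) (hf : Differentiable ℝ f)
    (l μ lam ψ c : ℝ)
    (hl : 0 < l) (hμ : 0 < μ) (hμl : μ ≤ l) (hlam : 0 < lam) (hc : 0 ≤ c)
    (hlip : ∀ x y, ‖gradient f x - gradient f y‖ ≤ l * ‖x - y‖)
    (hsc : ConvexOn ℝ Set.univ (fun θ => f θ - μ / 2 * ‖θ‖ ^ 2))
    (θstar : EuclideanSpace ℝ (Fin d)) (hmin : ∀ θ, f θstar ≤ f θ)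
    (hcurv : ∀ θ, f θ ≤ f θstar + lam / 2 * ‖θ - θstar‖ ^ 2)
    (θ : ℕ → EuclideanSpace ℝ (Fin d))
    (hgd : ∀ t, θ (t + 1) = θ t - (1 / l) • gradient f (θ t))
    (hψ : f (θ 0) - f θstar ≤ ψ)
    (T : ℕ) (θhat : EuclideanSpace ℝ (Fin d))
    (hrec : ‖θhat - θ T‖ ≤ Real.sqrt c) :
    f θhat - f θstar ≤
      lam / 2 * (Real.sqrt c + Real.sqrt (2 * ψ / μ * (1 - μ / l) ^ T)) ^ 2 := by
  have hsc' := aux_strong_convex hf hsc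
  have hgstar : gradient f θstar = 0 := by
    have hloc : IsLocalMin f θstar := Filter.Eventually.of_forall hmin
    have h0 : fderiv ℝ f θstar = 0 := hloc.fderiv_eq_zero
    rw [gradient, h0, map_zero]
  have hdelta0 : ∀ t, 0 ≤ f (θ t) - f θstar := fun t => sub_nonneg.2 (hmin _)
  have hψ0 : 0 ≤ ψ := le_trans (hdelta0 0) hψ
  have hfac0 : 0 ≤ 1 - μ / l := by
    have : μ / l ≤ 1 := (div_le_one hl).2 hμl
    linarith
  -- PL inequality
  have hPL : ∀ x, 2 * μ * (f x - f θstar) ≤ ‖gradient f x‖ ^ 2 := by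
    intro x
    have h1 := hsc' x θstar
    have h2 : -(‖gradient f x‖ * ‖θstar - x‖) ≤ (inner ℝ (gradient f x) (θstar - x) : ℝ) := by
      have ha := abs_real_inner_le_norm (gradient f x) (θstar - x)
      have hb := neg_abs_le ((inner ℝ (gradient f x) (θstar - x) : ℝ))
      linarith
    nlinarith [sq_nonneg (‖gradient f x‖ - μ * ‖θstar - x‖), hμ]
  -- one step of gradient descent
  have hstep : ∀ t, f (θ (t + 1)) - f θstar ≤ (1 - μ / l) * (f (θ t) - f θstar) := by
    intro t
    set G := gradient f (θ t) with hG
    have hd := aux_descent hf hl hlip (θ t) (θ (t + 1))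
    rw [hgd t] at hd
    have hsub : θ t - (1 / l) • G - θ t = -((1 / l) • G) := by abel
    rw [hsub] at hd
    have hi : (inner ℝ G (-((1 / l) • G)) : ℝ) = -(1 / l * ‖G‖ ^ 2) := by
      rw [inner_neg_right, real_inner_smul_right, real_inner_self_eq_norm_sq]
    have hn : ‖-((1 / l) • G)‖ ^ 2 = (1 / l) ^ 2 * ‖G‖ ^ 2 := by
      rw [norm_neg, norm_smul, mul_pow, Real.norm_eq_abs, sq_abs]
    rw [hi, hn] at hd
    have hcoef : -(1 / l * ‖G‖ ^ 2) + l / 2 * ((1 / l) ^ 2 * ‖G‖ ^ 2)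
        = -(1 / (2 * l)) * ‖G‖ ^ 2 := by
      field_simp
      ring
    rw [← hgd t] at hd
    have hkey : f (θ (t + 1)) ≤ f (θ t) - 1 / (2 * l) * ‖G‖ ^ 2 := by linarith
    have hPLt := hPL (θ t)
    have hpos : 0 < 1 / (2 * l) := by positivity
    have hmul : 1 / (2 * l) * (2 * μ * (f (θ t) - f θstar)) ≤ 1 / (2 * l) * ‖G‖ ^ 2 :=
      mul_le_mul_of_nonneg_left hPLt hpos.le
    have heq : (f (θ t) - f θstar) - 1 / (2 * l) * (2 * μ * (f (θ t) - f θstar))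
        = (1 - μ / l) * (f (θ t) - f θstar) := by
      field_simp
    linarith
  -- linear convergence
  have hT : ∀ t, f (θ t) - f θstar ≤ (1 - μ / l) ^ t * ψ := by
    intro t
    induction t with
    | zero => simpa using hψ
    | succ n ih =>
      calc f (θ (n + 1)) - f θstar ≤ (1 - μ / l) * (f (θ n) - f θstar) := hstep n
        _ ≤ (1 - μ / l) * ((1 - μ / l) ^ n * ψ) := mul_le_mul_of_nonneg_left ih hfac0
        _ = (1 - μ / l) ^ (n + 1) * ψ := by ring
  -- distance bound at time T
  have hnorm : ‖θ T - θstar‖ ≤ Real.sqrt (2 * ψ / μ * (1 - μ / l) ^ T) := by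
    have h1 := hsc' θstar (θ T)
    rw [hgstar, inner_zero_left] at h1
    have h2 : ‖θ T - θstar‖ ^ 2 ≤ 2 * ψ / μ * (1 - μ / l) ^ T := by
      rw [div_mul_eq_mul_div, le_div_iff₀ hμ]
      have h3 := hT T
      nlinarith
    calc ‖θ T - θstar‖ = Real.sqrt (‖θ T - θstar‖ ^ 2) :=
          (Real.sqrt_sq (norm_nonneg _)).symm
      _ ≤ _ := Real.sqrt_le_sqrt h2
  -- triangle inequality
  have htri : ‖θhat - θstar‖ ≤ Real.sqrt c + Real.sqrt (2 * ψ / μ * (1 - μ / l) ^ T) := by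
    have hd := dist_triangle θhat (θ T) θstar
    rw [dist_eq_norm, dist_eq_norm, dist_eq_norm] at hd
    linarith [add_le_add hrec hnorm]
  -- conclude via curvature bound
  have hsq : ‖θhat - θstar‖ ^ 2 ≤
      (Real.sqrt c + Real.sqrt (2 * ψ / μ * (1 - μ / l) ^ T)) ^ 2 :=
    pow_le_pow_left₀ (norm_nonneg _) htri 2
  have hfinal := hcurv θhat
  nlinarith [mul_le_mul_of_nonneg_left hsq (by positivity : (0:ℝ) ≤ lam / 2)]
end
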